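/- arXiv:2303.01290 — 3 statements merged into one kernel-verified Lean document; each statement's English description precedes it below -/
import Mathlib

section
/- For any connected graph G, the neighborhood diversity of the square G² is at most the modular-width of G. -/
/-- `M` is a module of the subgraph of `G` induced by `S`. -/
def IsModuleOn {V : Type*} (G : SimpleGraph V) (S M : Finset V) : Prop :=
  M ⊆ S ∧ ∀ u ∈ M, ∀ v ∈ M,
    (G.neighborSet u ∩ ↑S) \ ↑M = (G.neighborSet v ∩ ↑S) \ ↑M

/-- The induced subgraph `G[S]` has modular-width at most `ℓ`. -/
inductive MWLeOn {V : Type*} (G : SimpleGraph V) (ℓ : ℕ) : Finset V → Prop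
  | base (S : Finset V) (h : S.card ≤ ℓ) : MWLeOn G ℓ S
  | step (S : Finset V) (P : Finset (Finset V)) (hcard : P.card ≤ ℓ)
      (hne : ∀ T ∈ P, T.Nonempty)
      (hsub : ∀ T ∈ P, T ⊆ S)
      (hpart : ∀ v ∈ S, ∃! T, T ∈ P ∧ v ∈ T)
      (hmod : ∀ T ∈ P, IsModuleOn G S T)
      (hrec : ∀ T ∈ P, MWLeOn G ℓ T) : MWLeOn G ℓ S

/-- The modular-width of `G`. -/
noncomputable def mw {V : Type*} [Fintype V] (G : SimpleGraph V) : ℕ :=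
  sInf {ℓ | 2 ≤ ℓ ∧ MWLeOn G ℓ Finset.univ}

/-- The graph `H` has neighborhood diversity at most `ℓ`: the vertex set can be
partitioned into at most `ℓ` parts such that any two vertices in a common part
have the same neighborhoods (up to each other). -/
def NDLe {V : Type*} [Fintype V] (H : SimpleGraph V) (ℓ : ℕ) : Prop :=
  ∃ P : Finset (Finset V), P.card ≤ ℓ ∧ (∀ T ∈ P, T.Nonempty) ∧
    (∀ v : V, ∃! T, T ∈ P ∧ v ∈ T) ∧
    ∀ T ∈ P, ∀ u ∈ T, ∀ v ∈ T,
      H.neighborSet u \ {v} = H.neighborSet v \ {u}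

/-- The neighborhood diversity of `H`. -/
noncomputable def nd {V : Type*} [Fintype V] (H : SimpleGraph V) : ℕ :=
  sInf {ℓ | NDLe H ℓ}

/-- The square of `G`: distinct vertices are adjacent iff their distance in `G`
is at most `2`. -/
def SimpleGraph.square {V : Type*} (G : SimpleGraph V) : SimpleGraph V where
  Adj u v := u ≠ v ∧ G.Reachable u v ∧ G.dist u v ≤ 2
  symm := ⟨by
    rintro u v ⟨h1, h2, h3⟩
    exact ⟨h1.symm, h2.symm, by rwa [SimpleGraph.dist_comm]⟩⟩
  loopless := ⟨by rintro v ⟨h1, -, -⟩; exact h1 rfl⟩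

/-!
Let `P` be the top-level partition of `V` into at most `mw G` modules (or into singletons when
`|V| ≤ mw G`); a part equal to `V` can be decomposed in turn, so every part may be taken proper.
Two vertices `u, v` of a proper module `M` of a connected graph are twins in `G²`: some edge
leaves `M`, so some vertex outside `M` is adjacent to all of `M` and joins any two vertices of `M`
by a path of length two; and a vertex outside `M` sees `u` and `v` alike, so a path of length at
most two from `u` to it can be rerouted to start at `v`.
Hence `P` witnesses `nd G² ≤ mw G`.
-/

namespace SimpleGraph

variable {V : Type*} {G : SimpleGraph V} {u w : V}

theorem square_adj_iff :
    G.square.Adj u w ↔ u ≠ w ∧ (G.Adj u w ∨ ∃ x, G.Adj u x ∧ G.Adj x w) := by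
  constructor
  · rintro ⟨hne, hr, hd⟩
    obtain ⟨p, hp⟩ := hr.exists_walk_length_eq_dist
    refine ⟨hne, ?_⟩
    match p, hp with
    | .nil, _ => exact absurd rfl hne
    | .cons h .nil, _ => exact .inl h
    | .cons h (.cons h' .nil), _ => exact .inr ⟨_, h, h'⟩
    | .cons _ (.cons _ (.cons _ _)), hp => simp only [Walk.length_cons] at hp; omega
  · rintro ⟨hne, h | ⟨x, hux, hxw⟩⟩
    · exact ⟨hne, h.reachable, (dist_le h.toWalk).trans (by simp)⟩
    · let p : G.Walk u w := .cons hux (.cons hxw .nil)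
      exact ⟨hne, p.reachable, (dist_le p).trans (by simp [p])⟩

end SimpleGraph

open SimpleGraph Finset

section

variable {V : Type*} {G : SimpleGraph V}

theorem IsModuleOn.adj_of_adj {S M : Finset V} (hM : IsModuleOn G S M) {a b x : V}
    (ha : a ∈ M) (hb : b ∈ M) (hxS : x ∈ S) (hxM : x ∉ M) (hax : G.Adj a x) : G.Adj b x := by
  have hx : x ∈ (G.neighborSet a ∩ ↑S) \ ↑M := ⟨⟨hax, hxS⟩, hxM⟩
  rw [hM.2 a ha b hb] at hx
  exact hx.1.1

section Fintype

variable [Fintype V]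

theorem IsModuleOn.exists_forall_adj {M : Finset V} (hM : IsModuleOn G univ M)
    (hconn : G.Connected) (hne : M.Nonempty) (hproper : M ≠ univ) :
    ∃ x ∉ M, ∀ b ∈ M, G.Adj b x := by
  obtain ⟨a, ha⟩ := hne
  obtain ⟨z, hz⟩ := not_forall.mp (mt eq_univ_iff_forall.mpr hproper)
  obtain ⟨p⟩ := hconn.preconnected a z
  obtain ⟨d, -, hd, hdM⟩ := p.exists_boundary_dart (↑M) ha hz
  exact ⟨d.snd, hdM, fun b hb => hM.adj_of_adj hd hb (mem_univ _) hdM d.adj⟩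

theorem IsModuleOn.square_adj_of_square_adj {M : Finset V} (hM : IsModuleOn G univ M)
    (hconn : G.Connected) (hproper : M ≠ univ) {u v w : V} (hu : u ∈ M) (hv : v ∈ M)
    (hwv : w ≠ v) (huw : G.square.Adj u w) : G.square.Adj v w := by
  have adj {a b x} (ha : a ∈ M) (hb : b ∈ M) (hx : x ∉ M) : G.Adj a x → G.Adj b x :=
    hM.adj_of_adj ha hb (mem_univ x) hx
  rw [square_adj_iff] at huw ⊢
  refine ⟨hwv.symm, ?_⟩
  by_cases hw : w ∈ M
  · obtain ⟨x, -, hx⟩ := hM.exists_forall_adj hconn ⟨u, hu⟩ hproper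
    exact .inr ⟨x, hx v hv, (hx w hw).symm⟩
  obtain ⟨-, h | ⟨x, hux, hxw⟩⟩ := huw
  · exact .inl (adj hu hv hw h)
  · by_cases hx : x ∈ M
    · exact .inl (adj hx hv hw hxw)
    · exact .inr ⟨x, adj hu hv hx hux, hxw⟩

theorem IsModuleOn.neighborSet_square_eq {M : Finset V} (hM : IsModuleOn G univ M)
    (hconn : G.Connected) (hproper : M ≠ univ) {u v : V} (hu : u ∈ M) (hv : v ∈ M) :
    G.square.neighborSet u \ {v} = G.square.neighborSet v \ {u} := by
  have twin {a b} (ha : a ∈ M) (hb : b ∈ M) :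
      G.square.neighborSet a \ {b} ⊆ G.square.neighborSet b \ {a} :=
    fun _ ⟨haw, hwb⟩ =>
      ⟨hM.square_adj_of_square_adj hconn hproper ha hb hwb haw, (G.square.ne_of_adj haw).symm⟩
  exact (twin hu hv).antisymm (twin hv hu)

theorem ndLe_of_card_le (H : SimpleGraph V) {ℓ : ℕ} (hV : Fintype.card V ≤ ℓ) : NDLe H ℓ := by
  classical
  refine ⟨univ.image singleton, card_image_le.trans hV, ?_, fun v => ⟨{v}, ?_, ?_⟩, ?_⟩
  · simp
  · simp
  · rintro T ⟨hT, hvT⟩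
    obtain ⟨a, -, rfl⟩ := mem_image.mp hT
    rw [mem_singleton.mp hvT]
  · rintro T hT a ha b hb
    obtain ⟨c, -, rfl⟩ := mem_image.mp hT
    rw [mem_singleton.mp ha, mem_singleton.mp hb]

end Fintype

theorem MWLeOn.card_le_or_exists_proper_partition {ℓ : ℕ} {S : Finset V}
    (h : MWLeOn G ℓ S) :
    S.card ≤ ℓ ∨ ∃ P : Finset (Finset V), P.card ≤ ℓ ∧ (∀ T ∈ P, T.Nonempty) ∧
      (∀ v ∈ S, ∃! T, T ∈ P ∧ v ∈ T) ∧ ∀ T ∈ P, IsModuleOn G S T ∧ T ≠ S := by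
  induction h with
  | base S h => exact .inl h
  | step S P hcard hne _ hpart hmod _ ih =>
    by_cases hS : S ∈ P
    · exact ih S hS
    · exact .inr ⟨P, hcard, hne, hpart, fun T hT => ⟨hmod T hT, fun h => hS (h ▸ hT)⟩⟩

theorem mwLeOn_mw [Fintype V] (G : SimpleGraph V) : MWLeOn G (mw G) univ :=
  (Nat.sInf_mem (s := {ℓ | 2 ≤ ℓ ∧ MWLeOn G ℓ univ})
    ⟨max 2 (Fintype.card V), le_max_left _ _, .base _ (by simp)⟩).2

end

/-- For any connected graph `G`, the neighborhood diversity of the square `G²`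
is at most the modular-width of `G`. -/
theorem nd_square_le_mw {V : Type*} [Fintype V] (G : SimpleGraph V)
    (hconn : G.Connected) : nd G.square ≤ mw G := by
  apply Nat.sInf_le
  rcases (mwLeOn_mw G).card_le_or_exists_proper_partition with hcard | ⟨P, hcard, hne, hpart, hP⟩
  · exact ndLe_of_card_le _ hcard
  · refine ⟨P, hcard, hne, fun v => hpart v (mem_univ v), fun T hT u hu v hv => ?_⟩
    exact (hP T hT).1.neighborSet_square_eq hconn (hP T hT).2 hu hv
end

section
/- Let G = (V,E) be a graph of diameter at most k, p = (p_1,…,p_k) positive integers with max_d p_d ≤ 2·min_d p_d, and define w(u,v) = p_{dist_G(u,v)} for distinct u,v. Fix an ordering v_1,…,v_n of V and let l be an L(p)-labeling with l(v_1) ≤ l(v_2) ≤ … ≤ l(v_n) of minimum span among all L(p)-labelings nondecreasing along this ordering. Then l(v_i) = Σ_{t=1}^{i-1} w(v_t, v_{t+1}) for every i ∈ [n]. -/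
/-- `l` is an `L(p)`-labeling of `G`: any two distinct vertices at distance `d`
receive labels differing by at least `p d`. -/
def IsLpLabeling {V : Type*} (G : SimpleGraph V) (p : ℕ → ℕ) (l : V → ℕ) : Prop :=
  ∀ u v : V, u ≠ v → (p (G.dist u v) : ℤ) ≤ |(l u : ℤ) - (l v : ℤ)|

/-- The span of a labeling: its maximum label. -/
def span {V : Type*} [Fintype V] (l : V → ℕ) : ℕ :=
  Finset.univ.sup l

/-- `λ_p(G)`: the minimum span among all `L(p)`-labelings of `G`. -/
noncomputable def lambda {V : Type*} [Fintype V] (G : SimpleGraph V) (p : ℕ → ℕ) : ℕ :=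
  sInf {s | ∃ l : V → ℕ, IsLpLabeling G p l ∧ span l = s}

/-- The sum of the weights `w(v_t, v_{t+1}) = p (dist v_t v_{t+1})` along the first
`i` consecutive pairs of the ordering `σ`. -/
noncomputable def prefW {V : Type*} (G : SimpleGraph V) (p : ℕ → ℕ) {n : ℕ} (σ : Fin n → V) (i : ℕ) : ℕ :=
  ∑ t ∈ Finset.range i,
    if h : t + 1 < n then p (G.dist (σ ⟨t, by omega⟩) (σ ⟨t + 1, h⟩)) else 0

/-!
Write `P i` for the prefix sum of the weights along `σ`. A labeling that is nondecreasing along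
`σ` must climb by at least the weight at each step, so `l (σ j) - l (σ i) ≥ P j - P i` for
`i ≤ j`. Conversely `σ i ↦ P i` is itself an `L(p)`-labeling: for `j ≥ i + 2` already
`P j - P i ≥ w_i + w_(i+1) ≥ 2 p_min ≥ p_max`. Minimality gives `span l ≤ P (n - 1)`, which
squeezes `l (σ i)` between `P i` (climbing from `σ 0`) and `P i` (climbing to `σ (n - 1)`).
-/

section Ordering

variable {V : Type*} (G : SimpleGraph V) (p : ℕ → ℕ) {n : ℕ} (σ : Fin n ≃ V)

theorem prefW_succ (t : ℕ) (h : t + 1 < n) :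
    prefW G p σ (t + 1) = prefW G p σ t + p (G.dist (σ ⟨t, by omega⟩) (σ ⟨t + 1, h⟩)) := by
  rw [prefW, Finset.sum_range_succ, dif_pos h]
  rfl

theorem prefW_mono : Monotone (prefW G p σ) := fun _ _ hab =>
  Finset.sum_le_sum_of_subset (Finset.range_subset_range.mpr hab)

variable {G p}

theorem isLpLabeling_of_forall_lt {l : V → ℕ}
    (h : ∀ a b : Fin n, a < b → l (σ a) + p (G.dist (σ a) (σ b)) ≤ l (σ b)) :
    IsLpLabeling G p l := by
  intro u v huv
  obtain ⟨a, rfl⟩ := σ.surjective u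
  obtain ⟨b, rfl⟩ := σ.surjective v
  rcases lt_or_gt_of_ne (σ.injective.ne_iff.mp huv) with hab | hba
  · exact le_abs.2 (Or.inr (by have := h a b hab; omega))
  · exact le_abs.2 (Or.inl (by have := h b a hba; rw [G.dist_comm] at this; omega))

theorem IsLpLabeling.add_le_of_lt {l : V → ℕ} (hl : IsLpLabeling G p l)
    (hmono : Monotone (l ∘ σ)) {a b : Fin n} (hab : a < b) :
    l (σ a) + p (G.dist (σ a) (σ b)) ≤ l (σ b) := by
  have hdiff := hl _ _ (σ.injective.ne hab.ne)
  have hle : l (σ a) ≤ l (σ b) := hmono hab.le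
  rw [abs_sub_comm, abs_of_nonneg (by omega)] at hdiff
  omega

theorem add_prefW_le_add_prefW {l : V → ℕ}
    (hgap : ∀ a b : Fin n, a < b → l (σ a) + p (G.dist (σ a) (σ b)) ≤ l (σ b))
    {a b : Fin n} (hab : a ≤ b) :
    l (σ a) + prefW G p σ b ≤ l (σ b) + prefW G p σ a := by
  obtain ⟨b, hb⟩ := b
  induction b with
  | zero => rw [show a = ⟨0, hb⟩ from Fin.ext (Nat.le_zero.1 hab)]
  | succ t ih =>
    simp only [Fin.le_def] at ih hab ⊢
    rcases Nat.lt_or_ge a (t + 1) with hlt | hge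
    · have hprev := ih (by omega) (by omega)
      have hstep := hgap ⟨t, by omega⟩ ⟨t + 1, hb⟩ (Fin.lt_def.2 (by simp))
      rw [prefW_succ G p σ t hb]
      omega
    · rw [show a = ⟨t + 1, hb⟩ from Fin.ext (le_antisymm hab hge)]

theorem prefW_add_le_prefW
    (hw : ∀ u v u' v' : V, u ≠ v → u' ≠ v' → p (G.dist u v) ≤ 2 * p (G.dist u' v'))
    {a b : Fin n} (hab : a < b) :
    prefW G p σ a + p (G.dist (σ a) (σ b)) ≤ prefW G p σ b := by
  obtain ⟨a, ha⟩ := a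
  obtain ⟨b, hb⟩ := b
  rw [Fin.mk_lt_mk] at hab
  have hne : ∀ i j (hi : i < n) (hj : j < n), i ≠ j → σ ⟨i, hi⟩ ≠ σ ⟨j, hj⟩ :=
    fun i j _ _ h => σ.injective.ne (Fin.ne_of_val_ne h)
  rcases (show b = a + 1 ∨ a + 2 ≤ b by omega) with rfl | hab
  · rw [prefW_succ G p σ a hb]
  · -- `p (dist (σ a) (σ b))` is at most twice each of the next two weights, hence at most their sum.
    have hstep₁ := prefW_succ G p σ a (by omega)
    have hstep₂ := prefW_succ G p σ (a + 1) (by omega)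
    have hrest := prefW_mono G p σ (show a + 1 + 1 ≤ b by omega)
    have hw₁ := hw _ _ _ _ (hne a b ha hb (by omega)) (hne a (a + 1) ha (by omega) (by omega))
    have hw₂ := hw _ _ _ _ (hne a b ha hb (by omega))
      (hne (a + 1) (a + 1 + 1) (by omega) (by omega) (by omega))
    dsimp only
    omega

theorem isLpLabeling_prefW
    (hw : ∀ u v u' v' : V, u ≠ v → u' ≠ v' → p (G.dist u v) ≤ 2 * p (G.dist u' v')) :
    IsLpLabeling G p (fun v => prefW G p σ (σ.symm v)) :=
  isLpLabeling_of_forall_lt σ fun a b hab => by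
    simpa [add_comm] using prefW_add_le_prefW σ hw hab

theorem span_prefW_le [Fintype V] :
    span (fun v => prefW G p σ (σ.symm v)) ≤ prefW G p σ (n - 1) :=
  Finset.sup_le fun v _ => prefW_mono G p σ (by have := (σ.symm v).isLt; omega)

theorem eq_prefW_of_forall_le {l : V → ℕ}
    (hgap : ∀ a b : Fin n, a < b → l (σ a) + p (G.dist (σ a) (σ b)) ≤ l (σ b))
    (hle : ∀ v, l v ≤ prefW G p σ (n - 1)) (i : Fin n) :
    l (σ i) = prefW G p σ i := by
  have hn : 0 < n := i.pos
  have hlower := add_prefW_le_add_prefW σ hgap (show ⟨0, hn⟩ ≤ i from Nat.zero_le _)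
  have hupper := add_prefW_le_add_prefW σ hgap
    (show i ≤ ⟨n - 1, by omega⟩ from Nat.le_sub_one_of_lt i.isLt)
  have hlast := hle (σ ⟨n - 1, by omega⟩)
  have hzero : prefW G p σ 0 = 0 := Finset.sum_range_zero _
  dsimp only at hlower hupper
  omega

end Ordering

theorem labeling_eq_prefix_sums_general {V : Type*} [Fintype V] (G : SimpleGraph V) (p : ℕ → ℕ) (k : ℕ)
    (hconn : G.Connected) (hdiam : ∀ u v : V, G.dist u v ≤ k)
    (hratio : ∀ d ∈ Finset.Icc 1 k, ∀ d' ∈ Finset.Icc 1 k, p d ≤ 2 * p d')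
    (σ : Fin (Fintype.card V) ≃ V) (l : V → ℕ)
    (hl : IsLpLabeling G p l) (hmono : Monotone (l ∘ σ))
    (hmin : ∀ l' : V → ℕ, IsLpLabeling G p l' → Monotone (l' ∘ σ) → span l ≤ span l') :
    ∀ i : Fin (Fintype.card V), l (σ i) = prefW G p σ i.val := by
  have hdist : ∀ u v : V, u ≠ v → G.dist u v ∈ Finset.Icc 1 k := fun u v huv =>
    Finset.mem_Icc.2 ⟨hconn.pos_dist_of_ne huv, hdiam u v⟩
  have hw : ∀ u v u' v' : V, u ≠ v → u' ≠ v' → p (G.dist u v) ≤ 2 * p (G.dist u' v') :=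
    fun u v u' v' huv huv' => hratio _ (hdist u v huv) _ (hdist u' v' huv')
  have hprefW_mono : Monotone ((fun v => prefW G p σ (σ.symm v)) ∘ σ) :=
    fun a b hab => by simpa using prefW_mono G p σ hab
  refine eq_prefW_of_forall_le σ (fun a b hab => hl.add_le_of_lt σ hmono hab) fun v => ?_
  calc l v ≤ span l := Finset.le_sup (Finset.mem_univ v)
    _ ≤ span (fun v => prefW G p σ (σ.symm v)) := hmin _ (isLpLabeling_prefW σ hw) hprefW_mono
    _ ≤ prefW G p σ (Fintype.card V - 1) := span_prefW_le σ

/-- Let `G` have diameter at most `k`, `p` be positive on `[1, k]` with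
`p_max ≤ 2 p_min`, and `σ` an ordering of the vertices. If `l` is an
`L(p)`-labeling that is nondecreasing along `σ` and has minimum span among all
such labelings, then `l(v_i)` equals the sum of the weights `p (dist v_t v_{t+1})`
for `t = 1, …, i − 1`. -/
theorem labeling_eq_prefix_sums {V : Type*} [Fintype V] (G : SimpleGraph V) (p : ℕ → ℕ) (k : ℕ)
    (hconn : G.Connected) (hdiam : ∀ u v : V, G.dist u v ≤ k)
    (hpos : ∀ d ∈ Finset.Icc 1 k, 0 < p d)
    (hratio : ∀ d ∈ Finset.Icc 1 k, ∀ d' ∈ Finset.Icc 1 k, p d ≤ 2 * p d')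
    (σ : Fin (Fintype.card V) ≃ V) (l : V → ℕ)
    (hl : IsLpLabeling G p l) (hmono : Monotone (l ∘ σ))
    (hmin : ∀ l' : V → ℕ, IsLpLabeling G p l' → Monotone (l' ∘ σ) → span l ≤ span l') :
    ∀ i : Fin (Fintype.card V), l (σ i) = prefW G p σ i.val :=
  labeling_eq_prefix_sums_general G p k hconn hdiam hratio σ l hl hmono hmin
end

section
/- Let G be a graph of diameter at most 2 on n vertices, let p ≤ q be positive integers, and for an ordering π = (v_1,…,v_n) of V define B_π = { i ∈ [n−1] : v_i and v_{i+1} are non-adjacent in G }. Then the minimum span λ_{(p,q)}(G) of an L(p,q)-labeling satisfies λ_{(p,q)}(G) = (n−1)p + (q−p)·min_π |B_π|. -/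
/-- `l` is an `L(p,q)`-labeling of `G`: adjacent vertices receive labels at least `p`
apart, and vertices at distance `2` receive labels at least `q` apart. -/
def IsLpqLabeling {V : Type*} (G : SimpleGraph V) (p q : ℕ) (l : V → ℕ) : Prop :=
  ∀ u v : V, u ≠ v →
    (G.Adj u v → (p : ℤ) ≤ |(l u : ℤ) - (l v : ℤ)|) ∧
    (G.dist u v = 2 → (q : ℤ) ≤ |(l u : ℤ) - (l v : ℤ)|)

/-- `λ_{(p,q)}(G)`: the minimum span among all `L(p,q)`-labelings of `G`. -/
noncomputable def lambdaPQ {V : Type*} [Fintype V] (G : SimpleGraph V) (p q : ℕ) : ℕ :=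
  sInf {s | ∃ l : V → ℕ, IsLpqLabeling G p q l ∧ span l = s}

/-- The number of consecutive pairs of the ordering `L` that are non-adjacent in `G`,
i.e. `|B_π|`. -/
def nonAdjCount {V : Type*} (G : SimpleGraph V) [DecidableRel G.Adj] : List V → ℕ
  | a :: b :: rest => (if G.Adj a b then 0 else 1) + nonAdjCount G (b :: rest)
  | _ => 0

/-!
Give each pair of vertices the weight `p` if they are adjacent and `q` otherwise; an ordering of
the vertices is then a hamiltonian path of weight `(n - 1)p + (q - p)·|B_π|`. As the diameter is
at most `2`, an `L(p,q)`-labeling is exactly a map whose labels differ by at least the weight on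
every pair of distinct vertices. Listing the vertices by increasing label, consecutive labels
differ by at least the weight of the pair, so the span is at least the weight of that path.
Conversely, labelling each vertex by the weight of the path up to it is an `L(p,q)`-labeling:
consecutive vertices are separated by their weight, and vertices further apart by at least
`2p ≥ q`.
-/

lemma List.Pairwise.le_abs_sub {α : Type*} {x : α → ℕ} {w : α → α → ℕ}
    (hw : ∀ u v, w u v = w v u) {L : List α} (h : L.Pairwise fun u v => x u + w u v ≤ x v) :
    ∀ u ∈ L, ∀ v ∈ L, u ≠ v → (w u v : ℤ) ≤ |(x u : ℤ) - x v| := by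
  let sep (u v : α) : Prop := (w u v : ℤ) ≤ |(x u : ℤ) - x v|
  have : Std.Symm sep := ⟨fun u v (h : _ ≤ _) => show _ ≤ _ by rwa [hw, abs_sub_comm]⟩
  have hsep : L.Pairwise sep := h.imp fun {u v} huv => show _ ≤ _ by
    rw [abs_sub_comm, abs_of_nonneg (by omega)]
    omega
  exact fun u hu v hv => hsep.forall hu hv

lemma exists_list_pairwise_lt_of_injective {V α : Type*} [Fintype V] [LinearOrder α]
    {l : V → α} (hl : Function.Injective l) :
    ∃ L : List V, (∀ v, v ∈ L) ∧ L.Pairwise (fun u v => l u < l v) := by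
  let : LinearOrder V := LinearOrder.lift' l hl
  exact ⟨Finset.univ.sort, fun v => by simp,
    List.sortedLT_iff_pairwise.mp (Finset.sortedLT_sort _)⟩

lemma SimpleGraph.Connected.dist_eq_two_of_not_adj {V : Type*} {G : SimpleGraph V}
    (hconn : G.Connected) (hdiam : ∀ u v : V, G.dist u v ≤ 2)
    {u v : V} (hne : u ≠ v) (hadj : ¬ G.Adj u v) : G.dist u v = 2 := by
  have h0 : G.dist u v ≠ 0 := fun h => hne (hconn.dist_eq_zero_iff.mp h)
  have h1 : G.dist u v ≠ 1 := fun h => hadj (dist_eq_one_iff_adj.mp h)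
  have := hdiam u v
  omega

lemma lambdaPQ_le_span {V : Type*} [Fintype V] {G : SimpleGraph V} {p q : ℕ} {l : V → ℕ}
    (hl : IsLpqLabeling G p q l) : lambdaPQ G p q ≤ span l :=
  Nat.sInf_le ⟨l, hl, rfl⟩

namespace LpqLabeling

open SimpleGraph

variable {V : Type*} (G : SimpleGraph V) [DecidableRel G.Adj] (p q : ℕ)

def lpqWeight (a b : V) : ℕ := if G.Adj a b then p else q

def pathWeight : List V → ℕ
  | a :: b :: rest => lpqWeight G p q a b + pathWeight (b :: rest)
  | _ => 0

/-- The weight of the initial segment of `L` ending at `v`. -/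
def pathLabeling [DecidableEq V] : List V → V → ℕ
  | a :: b :: rest, v => if v = a then 0 else lpqWeight G p q a b + pathLabeling (b :: rest) v
  | _, _ => 0

variable {G p q}

lemma lpqWeight_comm (a b : V) : lpqWeight G p q a b = lpqWeight G p q b a := by
  simp only [lpqWeight, G.adj_comm]

lemma le_lpqWeight (hpq : p ≤ q) (a b : V) : p ≤ lpqWeight G p q a b := by
  unfold lpqWeight; split_ifs <;> omega

lemma lpqWeight_le (hpq : p ≤ q) (a b : V) : lpqWeight G p q a b ≤ q := by
  unfold lpqWeight; split_ifs <;> omega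

lemma pathWeight_eq (hpq : p ≤ q) :
    ∀ L : List V, pathWeight G p q L = (L.length - 1) * p + (q - p) * nonAdjCount G L
  | [] | [_] => by simp [pathWeight, nonAdjCount]
  | a :: b :: rest => by
    rw [pathWeight, pathWeight_eq hpq (b :: rest)]
    obtain ⟨r, rfl⟩ := Nat.exists_eq_add_of_le hpq
    simp only [nonAdjCount, lpqWeight, List.length_cons, Nat.add_sub_cancel,
      Nat.add_sub_cancel_left]
    split_ifs <;> ring

lemma add_pathWeight_le_of_isChain (l : V → ℕ) :
    ∀ (a : V) (t : List V), (a :: t).IsChain (fun u v => l u + lpqWeight G p q u v ≤ l v) →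
      l a + pathWeight G p q (a :: t) ≤ l ((a :: t).getLast (List.cons_ne_nil a t))
  | _, [], _ => by simp [pathWeight]
  | a, b :: rest, hchain => by
    rw [List.isChain_cons_cons] at hchain
    have := add_pathWeight_le_of_isChain l b rest hchain.2
    simp only [pathWeight, List.getLast_cons_cons]
    omega

section

variable [DecidableEq V]

lemma pathLabeling_cons_self (a : V) (t : List V) : pathLabeling G p q (a :: t) a = 0 := by
  cases t <;> simp [pathLabeling]

lemma pathLabeling_cons_cons_of_ne {a v : V} (b : V) (rest : List V) (hv : v ≠ a) :
    pathLabeling G p q (a :: b :: rest) v =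
      lpqWeight G p q a b + pathLabeling G p q (b :: rest) v := by
  simp [pathLabeling, hv]

lemma pathLabeling_le_pathWeight :
    ∀ (L : List V) (v : V), pathLabeling G p q L v ≤ pathWeight G p q L
  | [], _ | [_], _ => by simp [pathLabeling]
  | a :: b :: rest, v => by
    by_cases hv : v = a
    · simp [hv, pathLabeling_cons_self]
    · rw [pathLabeling_cons_cons_of_ne b rest hv, pathWeight]
      exact Nat.add_le_add_left (pathLabeling_le_pathWeight (b :: rest) v) _

lemma pairwise_pathLabeling (hpq : p ≤ q) (hq : q ≤ 2 * p) :
    ∀ L : List V, L.Nodup → L.Pairwise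
      (fun u v => pathLabeling G p q L u + lpqWeight G p q u v ≤ pathLabeling G p q L v)
  | [], _ | [_], _ => by simp
  | a :: b :: rest, hnodup => by
    have ih := pairwise_pathLabeling hpq hq (b :: rest) hnodup.of_cons
    have hne : ∀ w ∈ b :: rest, w ≠ a := fun w hw h =>
      (List.nodup_cons.mp hnodup).1 (h ▸ hw)
    refine List.pairwise_cons.mpr ⟨fun w hw => ?_, ih.imp_of_mem fun hu hv huv => ?_⟩
    · rw [pathLabeling_cons_self, pathLabeling_cons_cons_of_ne b rest (hne w hw), zero_add]
      rcases List.mem_cons.mp hw with rfl | hw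
      · simp [pathLabeling_cons_self]
      · -- two steps of weight at least `p` each, and `2p ≥ q`
        have hbw := List.rel_of_pairwise_cons ih hw
        rw [pathLabeling_cons_self] at hbw
        have := le_lpqWeight (G := G) hpq a b
        have := le_lpqWeight (G := G) hpq b w
        have := lpqWeight_le (G := G) hpq a w
        omega
    · rw [pathLabeling_cons_cons_of_ne b rest (hne _ hu),
        pathLabeling_cons_cons_of_ne b rest (hne _ hv)]
      omega

end

lemma isLpqLabeling_iff (hconn : G.Connected) (hdiam : ∀ u v : V, G.dist u v ≤ 2)
    (l : V → ℕ) : IsLpqLabeling G p q l ↔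
      ∀ u v : V, u ≠ v → (lpqWeight G p q u v : ℤ) ≤ |(l u : ℤ) - (l v : ℤ)| := by
  refine forall₃_congr fun u v hne => ?_
  by_cases hadj : G.Adj u v
  · have : G.dist u v ≠ 2 := by rw [dist_eq_one_iff_adj.mpr hadj]; decide
    simp [lpqWeight, hadj, this]
  · simp [lpqWeight, hadj, hconn.dist_eq_two_of_not_adj hdiam hne hadj]

lemma isLpqLabeling_pathLabeling [DecidableEq V] (hconn : G.Connected)
    (hdiam : ∀ u v : V, G.dist u v ≤ 2) (hpq : p ≤ q) (hq : q ≤ 2 * p) {L : List V}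
    (hnodup : L.Nodup) (hmem : ∀ v, v ∈ L) : IsLpqLabeling G p q (pathLabeling G p q L) :=
  (isLpqLabeling_iff hconn hdiam _).mpr fun u v =>
    (pairwise_pathLabeling hpq hq L hnodup).le_abs_sub lpqWeight_comm u (hmem u) v (hmem v)

lemma _root_.IsLpqLabeling.injective (hconn : G.Connected) (hdiam : ∀ u v : V, G.dist u v ≤ 2)
    (hp : 0 < p) (hpq : p ≤ q) {l : V → ℕ} (hl : IsLpqLabeling G p q l) :
    Function.Injective l := by
  intro u v huv
  by_contra hne
  have hsep := (isLpqLabeling_iff hconn hdiam l).mp hl u v hne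
  rw [huv, sub_self, abs_zero] at hsep
  have := le_lpqWeight (G := G) hpq u v
  omega

variable [Fintype V]

lemma pathWeight_eq_of_forall_mem (hpq : p ≤ q) {L : List V} (hnodup : L.Nodup)
    (hmem : ∀ v, v ∈ L) :
    pathWeight G p q L = (Fintype.card V - 1) * p + (q - p) * nonAdjCount G L := by
  classical
  rw [pathWeight_eq hpq, ← Fintype.card_congr (hnodup.getEquivOfForallMemList L hmem),
    Fintype.card_fin]

lemma lambdaPQ_le_pathWeight (hconn : G.Connected) (hdiam : ∀ u v : V, G.dist u v ≤ 2)
    (hpq : p ≤ q) (hq : q ≤ 2 * p) {L : List V} (hnodup : L.Nodup) (hmem : ∀ v, v ∈ L) :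
    lambdaPQ G p q ≤ pathWeight G p q L := by
  classical
  exact (lambdaPQ_le_span (isLpqLabeling_pathLabeling hconn hdiam hpq hq hnodup hmem)).trans
    (Finset.sup_le fun v _ => pathLabeling_le_pathWeight L v)

lemma exists_pathWeight_le_span (hconn : G.Connected) (hdiam : ∀ u v : V, G.dist u v ≤ 2)
    (hp : 0 < p) (hpq : p ≤ q) {l : V → ℕ} (hl : IsLpqLabeling G p q l) :
    ∃ L : List V, L.Nodup ∧ (∀ v, v ∈ L) ∧ pathWeight G p q L ≤ span l := by
  obtain ⟨L, hmem, hlt⟩ :=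
    exists_list_pairwise_lt_of_injective (hl.injective hconn hdiam hp hpq)
  refine ⟨L, hlt.imp fun huv h => by simp [h] at huv, hmem, ?_⟩
  have hchain : L.IsChain (fun u v => l u + lpqWeight G p q u v ≤ l v) :=
    (hlt.imp fun {u v} huv => by
      have := (isLpqLabeling_iff hconn hdiam l).mp hl u v (fun h => by simp [h] at huv)
      rw [abs_sub_comm, abs_of_pos (by omega)] at this
      omega).isChain
  cases L with
  | nil => exact Nat.zero_le _
  | cons a t =>
    have hpath := add_pathWeight_le_of_isChain l a t hchain
    have hlast : l ((a :: t).getLast (List.cons_ne_nil a t)) ≤ span l :=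
      Finset.le_sup (Finset.mem_univ _)
    omega

end LpqLabeling

open LpqLabeling in
/-- Let `G` be a graph of diameter at most `2` on `n` vertices and `p ≤ q ≤ 2p`
positive integers. Then `λ_{(p,q)}(G) = (n − 1)·p + (q − p)·min_π |B_π|`, where the
minimum is over all orderings `π` of the vertices and `B_π` is the set of indices of
consecutive non-adjacent pairs along `π`. -/
theorem lambda_pq_eq {V : Type*} [Fintype V] (G : SimpleGraph V) [DecidableRel G.Adj]
    (p q : ℕ) (hconn : G.Connected) (hdiam : ∀ u v : V, G.dist u v ≤ 2)
    (hp : 0 < p) (hpq : p ≤ q) (hq : q ≤ 2 * p) :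
    lambdaPQ G p q = (Fintype.card V - 1) * p +
      (q - p) * sInf {c | ∃ L : List V, L.Nodup ∧ (∀ v : V, v ∈ L) ∧
        nonAdjCount G L = c} := by
  classical
  obtain ⟨L, hnodup, hmem, hmin⟩ := Nat.sInf_mem (s := {c | ∃ L : List V, L.Nodup ∧
    (∀ v : V, v ∈ L) ∧ nonAdjCount G L = c})
    ⟨_, _, Finset.univ.nodup_toList, by simp, rfl⟩
  refine le_antisymm ?_ (le_csInf
    ⟨_, _, isLpqLabeling_pathLabeling hconn hdiam hpq hq hnodup hmem, rfl⟩ ?_)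
  · rw [← hmin, ← pathWeight_eq_of_forall_mem hpq hnodup hmem]
    exact lambdaPQ_le_pathWeight hconn hdiam hpq hq hnodup hmem
  · rintro _ ⟨l, hl, rfl⟩
    obtain ⟨L', hnodup', hmem', hL'⟩ := exists_pathWeight_le_span hconn hdiam hp hpq hl
    rw [pathWeight_eq_of_forall_mem hpq hnodup' hmem'] at hL'
    exact le_trans (by gcongr; exact Nat.sInf_le ⟨L', hnodup', hmem', rfl⟩) hL'
end
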